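/- If all structures in a class ℳ of epistemic transition structures over a common basis provide epistemic witnesses for all knowledge guards of an epistemically guarded transition system Γ, then Γ depends on the past with respect to ℳ. -/
import Mathlib


namespace KBP

/-- `k`-step reachable states of a transition system with initial states `S0`. -/
def RSk {S : Type} (S0 : Set S) (T : Set (S × S)) : ℕ → Set S
  | 0 => S0
  | k + 1 => RSk S0 T k ∪ {s' | ∃ s ∈ RSk S0 T k, (s, s') ∈ T}

/-- `k`-step reachable transitions. -/
def RTk {S : Type} (S0 : Set S) (T : Set (S × S)) : ℕ → Set (S × S)
  | 0 => ∅
  | k + 1 => RTk S0 T k ∪ {p | p ∈ T ∧ p.1 ∈ RSk S0 T k}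

/-- All reachable states. -/
def Reach {S : Type} (S0 : Set S) (T : Set (S × S)) : Set S := ⋃ k, RSk S0 T k

/-- Epistemic formulas (with the abbreviations `true`, `∨`, `M` as primitives). -/
inductive EFrm (P A : Type) : Type
  | prop : P → EFrm P A
  | nprop : P → EFrm P A
  | fls : EFrm P A
  | tru : EFrm P A
  | neg : EFrm P A → EFrm P A
  | and : EFrm P A → EFrm P A → EFrm P A
  | or : EFrm P A → EFrm P A → EFrm P A
  | K : A → EFrm P A → EFrm P A
  | M : A → EFrm P A → EFrm P A

/-- Ordinary (Kripke) satisfaction over the reachable part of an epistemic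
transition structure with transition relation `T`. -/
def ksat (E : A → Set (S × S)) (L : S → Set P) (S0 : Set S)
    (T : Set (S × S)) : S → EFrm P A → Prop
  | s, .prop p => p ∈ L s
  | s, .nprop p => p ∉ L s
  | _, .fls => False
  | _, .tru => True
  | s, .neg φ => ¬ ksat E L S0 T s φ
  | s, .and φ ψ => ksat E L S0 T s φ ∧ ksat E L S0 T s ψ
  | s, .or φ ψ => ksat E L S0 T s φ ∨ ksat E L S0 T s ψ
  | s, .K a φ => ∀ s' ∈ Reach S0 T, (s, s') ∈ E a → ksat E L S0 T s' φ
  | s, .M a φ => ∃ s' ∈ Reach S0 T, (s, s') ∈ E a ∧ ksat E L S0 T s' φ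

/-- A formula depends on the past w.r.t. a class `ℳ` of transition relations. -/
def dependsOnPast (E : A → Set (S × S)) (L : S → Set P) (S0 : Set S)
    (ℳ : Set (Set (S × S))) (φ : EFrm P A) : Prop :=
  ∀ T₁ ∈ ℳ, ∀ T₂ ∈ ℳ, ∀ k : ℕ, RTk S0 T₁ k = RTk S0 T₂ k →
    ∀ s, s ∈ RSk S0 T₁ k → s ∈ RSk S0 T₂ k →
      (ksat E L S0 T₁ s φ ↔ ksat E L S0 T₂ s φ)

/-- Knowledge subformulas `K a ψ` (as pairs `(a, ψ)`) occurring in a formula. -/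
def kguards {P A : Type} : EFrm P A → Set (A × EFrm P A)
  | .prop _ => ∅
  | .nprop _ => ∅
  | .fls => ∅
  | .tru => ∅
  | .neg φ => kguards φ
  | .and φ ψ => kguards φ ∪ kguards ψ
  | .or φ ψ => kguards φ ∪ kguards ψ
  | .K a φ => insert (a, φ) (kguards φ)
  | .M a φ => insert (a, EFrm.neg φ) (kguards φ)

/-- `T` provides epistemic witnesses for the knowledge formula `K a φ`. -/
def providesWitness (E : A → Set (S × S)) (L : S → Set P) (S0 : Set S)
    (T : Set (S × S)) (a : A) (φ : EFrm P A) : Prop :=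
  ∀ k : ℕ, ∀ s ∈ RSk S0 T k, ¬ ksat E L S0 T s (.K a φ) →
    ∃ s' ∈ RSk S0 T k, (s, s') ∈ E a ∧ ¬ ksat E L S0 T s' φ

lemma RSk_eq_union {S : Type} (S0 : Set S) (T : Set (S × S)) :
    ∀ k, RSk S0 T k = S0 ∪ Prod.snd '' RTk S0 T k
  | 0 => by simp [RSk, RTk]
  | k + 1 => by
    rw [RSk, RTk, RSk_eq_union S0 T k]
    ext s
    simp only [Set.mem_union, Set.mem_image, Set.mem_setOf_eq, Prod.exists]
    constructor
    · rintro ((h | ⟨p1, p2, hp, rfl⟩) | ⟨t, ht, htT⟩)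
      · exact Or.inl h
      · exact Or.inr ⟨p1, p2, Or.inl hp, rfl⟩
      · exact Or.inr ⟨t, s, Or.inr ⟨htT, ht⟩, rfl⟩
    · rintro (h | ⟨p1, p2, (hp | ⟨hpT, hp1⟩), rfl⟩)
      · exact Or.inl (Or.inl h)
      · exact Or.inl (Or.inr ⟨p1, p2, hp, rfl⟩)
      · exact Or.inr ⟨p1, hp1, hpT⟩

lemma RSk_eq_of_RTk_eq {S : Type} {S0 : Set S} {T₁ T₂ : Set (S × S)} {k : ℕ}
    (h : RTk S0 T₁ k = RTk S0 T₂ k) : RSk S0 T₁ k = RSk S0 T₂ k := by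
  rw [RSk_eq_union, RSk_eq_union, h]

lemma RSk_subset_Reach {S : Type} (S0 : Set S) (T : Set (S × S)) (k : ℕ) :
    RSk S0 T k ⊆ Reach S0 T :=
  Set.subset_iUnion (RSk S0 T) k

lemma ksat_iff_of_witness {S P A : Type}
    (E : A → Set (S × S)) (L : S → Set P) (S0 : Set S)
    (T₁ T₂ : Set (S × S)) (k : ℕ) (hRS : RSk S0 T₁ k = RSk S0 T₂ k)
    (φ : EFrm P A)
    (hw₁ : ∀ q ∈ kguards φ, providesWitness E L S0 T₁ q.1 q.2)
    (hw₂ : ∀ q ∈ kguards φ, providesWitness E L S0 T₂ q.1 q.2) :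
    ∀ s ∈ RSk S0 T₁ k, (ksat E L S0 T₁ s φ ↔ ksat E L S0 T₂ s φ) := by
  induction φ with
  | prop p => intro s _; simp [ksat]
  | nprop p => intro s _; simp [ksat]
  | fls => intro s _; simp [ksat]
  | tru => intro s _; simp [ksat]
  | neg φ ih =>
    intro s hs
    simp only [ksat]
    exact not_congr (ih hw₁ hw₂ s hs)
  | and φ ψ ihφ ihψ =>
    intro s hs
    simp only [ksat]
    exact and_congr
      (ihφ (fun q hq => hw₁ q (Or.inl hq)) (fun q hq => hw₂ q (Or.inl hq)) s hs)
      (ihψ (fun q hq => hw₁ q (Or.inr hq)) (fun q hq => hw₂ q (Or.inr hq)) s hs)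
  | or φ ψ ihφ ihψ =>
    intro s hs
    simp only [ksat]
    exact or_congr
      (ihφ (fun q hq => hw₁ q (Or.inl hq)) (fun q hq => hw₂ q (Or.inl hq)) s hs)
      (ihψ (fun q hq => hw₁ q (Or.inr hq)) (fun q hq => hw₂ q (Or.inr hq)) s hs)
  | K a φ ih =>
    intro s hs
    have hsub₁ : ∀ q ∈ kguards φ, providesWitness E L S0 T₁ q.1 q.2 :=
      fun q hq => hw₁ q (Set.mem_insert_of_mem _ hq)
    have hsub₂ : ∀ q ∈ kguards φ, providesWitness E L S0 T₂ q.1 q.2 :=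
      fun q hq => hw₂ q (Set.mem_insert_of_mem _ hq)
    have hK₁ : providesWitness E L S0 T₁ a φ := hw₁ (a, φ) (Set.mem_insert _ _)
    have hK₂ : providesWitness E L S0 T₂ a φ := hw₂ (a, φ) (Set.mem_insert _ _)
    constructor
    · intro h1
      by_contra h2
      obtain ⟨s', hs', hE, hns'⟩ := hK₂ k s (hRS ▸ hs) h2
      have hs'₁ : s' ∈ RSk S0 T₁ k := hRS ▸ hs'
      exact hns' ((ih hsub₁ hsub₂ s' hs'₁).mp
        (h1 s' (RSk_subset_Reach S0 T₁ k hs'₁) hE))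
    · intro h1
      by_contra h2
      obtain ⟨s', hs', hE, hns'⟩ := hK₁ k s hs h2
      have hs'₂ : s' ∈ RSk S0 T₂ k := hRS ▸ hs'
      exact hns' ((ih hsub₁ hsub₂ s' hs').mpr
        (h1 s' (RSk_subset_Reach S0 T₂ k hs'₂) hE))
  | M a φ ih =>
    intro s hs
    have hsub₁ : ∀ q ∈ kguards φ, providesWitness E L S0 T₁ q.1 q.2 :=
      fun q hq => hw₁ q (Set.mem_insert_of_mem _ hq)
    have hsub₂ : ∀ q ∈ kguards φ, providesWitness E L S0 T₂ q.1 q.2 :=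
      fun q hq => hw₂ q (Set.mem_insert_of_mem _ hq)
    have hK₁ : providesWitness E L S0 T₁ a (.neg φ) :=
      hw₁ (a, .neg φ) (Set.mem_insert _ _)
    have hK₂ : providesWitness E L S0 T₂ a (.neg φ) :=
      hw₂ (a, .neg φ) (Set.mem_insert _ _)
    constructor
    · rintro ⟨s', hs'R, hE, hφ⟩
      have hnK : ¬ ksat E L S0 T₁ s (.K a (.neg φ)) := fun h => h s' hs'R hE hφ
      obtain ⟨t, ht, htE, htn⟩ := hK₁ k s hs hnK
      have htφ : ksat E L S0 T₁ t φ := not_not.mp htn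
      have ht₂ : t ∈ RSk S0 T₂ k := hRS ▸ ht
      exact ⟨t, RSk_subset_Reach S0 T₂ k ht₂, htE,
        (ih hsub₁ hsub₂ t ht).mp htφ⟩
    · rintro ⟨s', hs'R, hE, hφ⟩
      have hnK : ¬ ksat E L S0 T₂ s (.K a (.neg φ)) := fun h => h s' hs'R hE hφ
      obtain ⟨t, ht, htE, htn⟩ := hK₂ k s (hRS ▸ hs) hnK
      have htφ : ksat E L S0 T₂ t φ := not_not.mp htn
      have ht₁ : t ∈ RSk S0 T₁ k := hRS ▸ ht
      exact ⟨t, RSk_subset_Reach S0 T₁ k ht₁, htE,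
        (ih hsub₁ hsub₂ t ht₁).mpr htφ⟩

/-- If all structures in `ℳ` provide epistemic witnesses for all knowledge
guards occurring in the action guards of `Γ`, then `Γ` depends on the past
w.r.t. `ℳ`. -/
theorem dependsOnPast_of_providesWitness {S P A : Type}
    (E : A → Set (S × S)) (L : S → Set P) (S0 : Set S)
    (Γ : Set (EFrm P A × Set (S × S))) (ℳ : Set (Set (S × S)))
    (hwit : ∀ T ∈ ℳ, ∀ g ∈ Γ, ∀ q ∈ kguards g.1,
      providesWitness E L S0 T q.1 q.2) :
    ∀ g ∈ Γ, dependsOnPast E L S0 ℳ g.1 := by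
  intro g hg T₁ hT₁ T₂ hT₂ k hRT s hs₁ _
  exact ksat_iff_of_witness E L S0 T₁ T₂ k (RSk_eq_of_RTk_eq hRT) g.1
    (fun q hq => hwit T₁ hT₁ g hg q hq) (fun q hq => hwit T₂ hT₂ g hg q hq) s hs₁

end KBP
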